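/- arXiv:2507.09125 — 5 statements merged into one kernel-verified Lean document; each statement's English description precedes it below -/
import Mathlib

section
/- Let F be a finite field of odd cardinality q, let ψ : F → ℂ be a nontrivial additive character, let η be the quadratic character of F, and let ρ be any multiplicative character of F. Then the Gauss sums satisfy the duplication relation τ(ρ²)·τ(η) = ρ(4)·τ(ρ)·τ(ρ·η). -/
/-!
Multiplying the Jacobi-sum factorizations `τ(ρ)² = τ(ρ²) J(ρ,ρ)` and `τ(ρ) τ(η) = τ(ρη) J(ρ,η)`
reduces the relation to `J(ρ,η) = ρ(4) J(ρ,ρ)`. For the latter, `4t(1-t) = 1 - (1-2t)²`, so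
`ρ(4) J(ρ,ρ) = ∑ₛ ρ(1 - s²)`, and an element `u` has `1 + η(u)` square roots, so this sum is
`∑ᵤ (1 + η(u)) ρ(1 - u) = J(η,ρ)`. If `ρ² = 1`, then `ρ` is `1` or `η` and the relation is
immediate.
-/

open Finset

namespace MulChar

variable {M R : Type*} [CommMonoid M]

lemma apply_sq_eq_one [CommMonoidWithZero R] {χ : MulChar M R} (hχ : χ ^ 2 = 1) {a : M}
    (ha : IsUnit a) : χ (a ^ 2) = 1 := by
  rw [map_pow, ← χ.pow_apply' two_ne_zero, hχ, one_apply ha]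

lemma apply_eq_neg_one_of_sq_eq_one [CommRing R] [NoZeroDivisors R] {g : Mˣ}
    (hg : ∀ x, x ∈ Subgroup.zpowers g) {χ : MulChar M R} (hχ : χ ≠ 1) (hχ2 : χ ^ 2 = 1) :
    χ g = -1 := by
  have hsq : χ g * χ g = 1 := by rw [← sq, ← map_pow, apply_sq_eq_one hχ2 (Units.isUnit _)]
  refine (mul_self_eq_one_iff.mp hsq).resolve_left fun h ↦ hχ ?_
  rwa [eq_iff hg, one_apply_coe]

lemma eq_of_sq_eq_one [IsCyclic Mˣ] [CommRing R] [NoZeroDivisors R] {χ φ : MulChar M R}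
    (hχ : χ ≠ 1) (hχ2 : χ ^ 2 = 1) (hφ : φ ≠ 1) (hφ2 : φ ^ 2 = 1) : χ = φ := by
  obtain ⟨g, hg⟩ := IsCyclic.exists_generator (α := Mˣ)
  rw [eq_iff hg, apply_eq_neg_one_of_sq_eq_one hg hχ hχ2, apply_eq_neg_one_of_sq_eq_one hg hφ hφ2]

end MulChar

section FiniteField

variable {F : Type*} [Field F] [Fintype F]

lemma ringChar_ne_two_of_sq_eq_one {R : Type*} [CommMonoidWithZero R] {χ : MulChar F R}
    (hχ : χ ≠ 1) (hχ2 : χ ^ 2 = 1) : ringChar F ≠ 2 := by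
  intro hF
  refine hχ (MulChar.ext fun a ↦ ?_)
  obtain ⟨b, hb⟩ := FiniteField.isSquare_of_char_two hF (a : F)
  have hb0 : b ≠ 0 := by rintro rfl; simp at hb
  rw [MulChar.one_apply_coe, hb, ← sq, MulChar.apply_sq_eq_one hχ2 hb0.isUnit]

variable [DecidableEq F]

lemma eq_quadraticChar_of_sq_eq_one {R : Type*} [CommRing R] [IsDomain R] [CharZero R]
    {χ : MulChar F R} (hχ : χ ≠ 1) (hχ2 : χ ^ 2 = 1) :
    χ = (quadraticChar F).ringHomComp (Int.castRingHom R) :=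
  MulChar.eq_of_sq_eq_one hχ hχ2
    ((MulChar.ringHomComp_ne_one_iff Int.cast_injective).mpr
      (quadraticChar_ne_one (ringChar_ne_two_of_sq_eq_one hχ hχ2)))
    ((quadraticChar_isQuadratic F).comp _).sq_eq_one

lemma sum_comp_sq_eq_sum_quadraticChar_smul {M : Type*} [AddCommGroup M] (hF : ringChar F ≠ 2)
    (f : F → M) : ∑ s, f (s ^ 2) = ∑ u, (quadraticChar F u + 1) • f u := by
  rw [← sum_fiberwise_of_maps_to (g := (· ^ 2)) (fun _ _ ↦ mem_univ _)]
  refine sum_congr rfl fun u _ ↦ ?_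
  rw [sum_congr rfl fun s hs ↦ congrArg f (mem_filter.mp hs).2, sum_const, ← natCast_zsmul,
    ← quadraticChar_card_sqrts hF u]
  congr 3
  ext; simp

lemma jacobiSum_quadraticChar {R : Type*} [CommRing R] [IsDomain R] (hF : ringChar F ≠ 2)
    {ρ : MulChar F R} (hρ : ρ ≠ 1) :
    jacobiSum ρ ((quadraticChar F).ringHomComp (Int.castRingHom R)) = ρ 4 * jacobiSum ρ ρ := by
  have h2 : (2 : F) ≠ 0 := Ring.two_ne_zero hF
  have hsum : ∑ u, ρ (1 - u) = 0 := by
    rw [← MulChar.sum_eq_zero_of_ne_one hρ]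
    exact Fintype.sum_equiv (Equiv.subLeft 1) _ _ fun _ ↦ rfl
  calc jacobiSum ρ ((quadraticChar F).ringHomComp (Int.castRingHom R))
      = ∑ u, (quadraticChar F u + 1) • ρ (1 - u) := by
        rw [jacobiSum_comm, jacobiSum]
        simp [add_smul, sum_add_distrib, hsum]
    _ = ∑ s, ρ (1 - s ^ 2) := (sum_comp_sq_eq_sum_quadraticChar_smul hF _).symm
    _ = ∑ t, ρ (1 - (1 - 2 * t) ^ 2) :=
        (Fintype.sum_equiv ((Equiv.mulLeft₀ 2 h2).trans (Equiv.subLeft 1)) _ _ fun _ ↦ rfl).symm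
    _ = ρ 4 * jacobiSum ρ ρ := by
        simp only [jacobiSum, mul_sum, ← map_mul]
        congr! 2
        ring

end FiniteField

lemma gaussSum_sq_mul_eq_of_jacobiSum_eq {F F' : Type*} [Field F] [Fintype F] [Field F']
    (hq : (Fintype.card F : F') ≠ 0) {ρ η : MulChar F F'} (hρρ : ρ * ρ ≠ 1) (hρη : ρ * η ≠ 1)
    {ψ : AddChar F F'} (hψ : ψ.IsPrimitive) {c : F'}
    (hJ : jacobiSum ρ η = c * jacobiSum ρ ρ) :
    gaussSum (ρ ^ 2) ψ * gaussSum η ψ = c * (gaussSum ρ ψ * gaussSum (ρ * η) ψ) := by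
  have hρ : ρ ≠ 1 := by rintro rfl; simp at hρρ
  have hGρ := gaussSum_ne_zero_of_nontrivial hq hρ hψ
  have hGρρ := gaussSum_ne_zero_of_nontrivial hq hρρ hψ
  have hGρη := gaussSum_ne_zero_of_nontrivial hq hρη hψ
  rw [jacobiSum_eq_gaussSum_mul_gaussSum_div_gaussSum hq hρη hψ,
    jacobiSum_eq_gaussSum_mul_gaussSum_div_gaussSum hq hρρ hψ] at hJ
  field_simp at hJ
  rw [sq]
  linear_combination hJ

theorem gaussSum_duplication_general (F : Type*) [Field F] [Fintype F]
    (ψ : AddChar F ℂ) (hψ : ψ ≠ 1)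
    (η : MulChar F ℂ) (hη : η ≠ 1) (hη2 : η ^ 2 = 1)
    (ρ : MulChar F ℂ) :
    gaussSum (ρ ^ 2) ψ * gaussSum η ψ =
      ρ 4 * (gaussSum ρ ψ * gaussSum (ρ * η) ψ) := by
  classical
  have hF : ringChar F ≠ 2 := ringChar_ne_two_of_sq_eq_one hη hη2
  by_cases hρ2 : ρ ^ 2 = 1
  · have hρ4 : ρ 4 = 1 := by
      rw [show (4 : F) = 2 ^ 2 by norm_num,
        MulChar.apply_sq_eq_one hρ2 (Ring.two_ne_zero hF).isUnit]
    rw [hρ4, one_mul]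
    rcases eq_or_ne ρ 1 with rfl | hρ
    · simp
    · obtain rfl := MulChar.eq_of_sq_eq_one hρ hρ2 hη hη2
      rw [hρ2, ← sq, hρ2, mul_comm]
  · have hρ : ρ ≠ 1 := by rintro rfl; simp at hρ2
    have hρη : ρ * η ≠ 1 := fun h ↦ hρ2 <| by
      rwa [eq_inv_of_mul_eq_one_left h, inv_pow, inv_eq_one]
    refine gaussSum_sq_mul_eq_of_jacobiSum_eq (Nat.cast_ne_zero.mpr Fintype.card_ne_zero)
      (by rwa [← sq]) hρη (AddChar.IsPrimitive.of_ne_one hψ) ?_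
    rw [eq_quadraticChar_of_sq_eq_one hη hη2]
    exact jacobiSum_quadraticChar hF hρ

/-- Duplication relation for Gauss sums over a finite field of odd cardinality:
`τ(ρ²)·τ(η) = ρ(4)·τ(ρ)·τ(ρη)` where `η` is the quadratic character. -/
theorem gaussSum_duplication (F : Type*) [Field F] [Fintype F]
    (hq : Odd (Fintype.card F))
    (ψ : AddChar F ℂ) (hψ : ψ ≠ 1)
    (η : MulChar F ℂ) (hη : η ≠ 1) (hη2 : η ^ 2 = 1)
    (ρ : MulChar F ℂ) :
    gaussSum (ρ ^ 2) ψ * gaussSum η ψ =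
      ρ 4 * (gaussSum ρ ψ * gaussSum (ρ * η) ψ) :=
  gaussSum_duplication_general F ψ hψ η hη hη2 ρ
end

section
/- Let F be a finite field of odd cardinality q, let ψ : F → ℂ be a nontrivial additive character, let η be the quadratic character of F, and let χ₀ and χ be nontrivial multiplicative characters of F. Consider the sum S₂' := ∑ over tuples (u,v,x₁,x₂,y₁,y₂) ∈ F⁶ satisfying x₁x₂ = u·v·y₁·y₂ of χ₀(u)·χ₀⁻¹(v)·χ(y₁)·η(y₂)·ψ(x₁+x₂−y₁−y₂). Then S₂' = 0 if χ₀ ≠ η, and S₂' = −η(−1)·q·(q−1)·∑_{t ∈ F} η(t)·χ(t)·ψ(−t) if χ₀ = η. -/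
/-! Sum over `u, v` first: for `b ≠ 0` the constraint `a = u v b` determines `v`, so this inner
sum is `χ₀⁻¹(a) χ₀(b) ∑ χ₀²`. The remaining sum over `x₁, x₂, y₁, y₂` then factors into Gauss
sums. Since `Fˣ` is cyclic, `η` is the only nontrivial character with square `1`, so `∑ χ₀²`
vanishes unless `χ₀ = η`; in that case `g(η, ψ)² = η(-1) q` and `g(1, ψ⁻¹) = -1`. -/

open Finset

namespace MulChar

lemma eq_of_ne_one_of_sq_eq_one {M R : Type*} [CommMonoid M] [IsCyclic Mˣ] [CommRing R]
    [NoZeroDivisors R] {χ₁ χ₂ : MulChar M R} (h₁ : χ₁ ≠ 1) (h₁2 : χ₁ ^ 2 = 1)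
    (h₂ : χ₂ ≠ 1) (h₂2 : χ₂ ^ 2 = 1) : χ₁ = χ₂ := by
  obtain ⟨g, hg⟩ := IsCyclic.exists_generator (α := Mˣ)
  have apply_generator {χ : MulChar M R} (hχ : χ ≠ 1) (hχ2 : χ ^ 2 = 1) : χ g = -1 := by
    refine (sq_eq_one_iff.mp ?_).resolve_left fun h ↦ hχ ((eq_iff hg χ 1).mpr ?_)
    · rw [← pow_apply_coe, hχ2, one_apply_coe]
    · rw [h, one_apply_coe]
  rw [eq_iff hg, apply_generator h₁ h₁2, apply_generator h₂ h₂2]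

variable {F R : Type*} [Field F] [Fintype F] [DecidableEq F] [CommRing R] [IsDomain R]

lemma sum_sum_ite_apply_mul_inv_apply (χ : MulChar F R) (hχ : χ ≠ 1) (a b : F) :
    ∑ u, ∑ v, (if a = u * v * b then χ u * χ⁻¹ v else 0) = χ⁻¹ a * χ b * ∑ u, (χ ^ 2) u := by
  rcases eq_or_ne b 0 with rfl | hb
  · rcases eq_or_ne a 0 with rfl | ha
    · simp only [mul_zero, if_true, ← sum_mul_sum, sum_eq_zero_of_ne_one hχ, MulChar.map_zero,
        zero_mul]
    · simp [ha]
  rw [mul_sum]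
  refine sum_congr rfl fun u _ ↦ ?_
  rcases eq_or_ne u 0 with rfl | hu
  · simp
  have hv (v : F) : a = u * v * b ↔ v = a / (u * b) := by
    rw [eq_div_iff (mul_ne_zero hu hb)]
    constructor <;> intro h <;> linear_combination -h
  simp only [hv, Fintype.sum_ite_eq', inv_apply', div_eq_mul_inv, mul_inv, inv_inv, map_mul,
    pow_apply' χ two_ne_zero]
  ring

end MulChar

lemma sum_comm_two_four {M α : Type*} [AddCommMonoid M] [Fintype α]
    (f : α → α → α → α → α → α → M) :
    ∑ u, ∑ v, ∑ a, ∑ b, ∑ c, ∑ d, f u v a b c d = ∑ a, ∑ b, ∑ c, ∑ d, ∑ u, ∑ v, f u v a b c d := by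
  have sum_comm_four (g : α → α → α → α → α → M) :
      ∑ x, ∑ a, ∑ b, ∑ c, ∑ d, g x a b c d = ∑ a, ∑ b, ∑ c, ∑ d, ∑ x, g x a b c d :=
    sum_comm.trans <| sum_congr rfl fun _ _ ↦ sum_comm.trans <| sum_congr rfl fun _ _ ↦
      sum_comm.trans <| sum_congr rfl fun _ _ ↦ sum_comm
  exact (sum_congr rfl fun u _ ↦ sum_comm_four (f u)).trans (sum_comm_four _)

section S₂'

variable {F R : Type*} [Field F] [Fintype F] [DecidableEq F] [CommRing R]

noncomputable def S₂' (χ₀ χ χ' : MulChar F R) (ψ : AddChar F R) : R :=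
  ∑ u, ∑ v, ∑ x₁, ∑ x₂, ∑ y₁, ∑ y₂, if x₁ * x₂ = u * v * y₁ * y₂ then
    χ₀ u * χ₀⁻¹ v * χ y₁ * χ' y₂ * ψ (x₁ + x₂ - y₁ - y₂) else 0

lemma S₂'_eq_mul_gaussSum [IsDomain R] {χ₀ : MulChar F R} (hχ₀ : χ₀ ≠ 1) (χ χ' : MulChar F R)
    (ψ : AddChar F R) :
    S₂' χ₀ χ χ' ψ = (∑ u, (χ₀ ^ 2) u) * gaussSum χ₀⁻¹ ψ ^ 2 *
      gaussSum (χ₀ * χ) ψ⁻¹ * gaussSum (χ₀ * χ') ψ⁻¹ := by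
  calc S₂' χ₀ χ χ' ψ
      = ∑ x₁, ∑ x₂, ∑ y₁, ∑ y₂,
          (∑ u, ∑ v, if x₁ * x₂ = u * v * (y₁ * y₂) then χ₀ u * χ₀⁻¹ v else 0) *
            (χ y₁ * χ' y₂ * ψ (x₁ + x₂ - y₁ - y₂)) := by
        rw [S₂', sum_comm_two_four]
        simp only [sum_mul, ite_mul, zero_mul, mul_assoc]
    _ = ∑ x₁, ∑ x₂, ∑ y₁, ∑ y₂, (∑ u, (χ₀ ^ 2) u) * ((χ₀⁻¹ x₁ * ψ x₁) * ((χ₀⁻¹ x₂ * ψ x₂) *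
          (((χ₀ * χ) y₁ * ψ⁻¹ y₁) * ((χ₀ * χ') y₂ * ψ⁻¹ y₂)))) := by
        refine sum_congr rfl fun x₁ _ ↦ sum_congr rfl fun x₂ _ ↦
          sum_congr rfl fun y₁ _ ↦ sum_congr rfl fun y₂ _ ↦ ?_
        simp only [MulChar.sum_sum_ite_apply_mul_inv_apply χ₀ hχ₀, map_mul, MulChar.mul_apply,
          AddChar.inv_apply, sub_eq_add_neg, AddChar.map_add_eq_mul]
        ring
    _ = _ := by simp only [← mul_sum, ← sum_mul, gaussSum]; ring

end S₂'

theorem S2_sum_eval_general (F : Type*) [Field F] [Fintype F] [DecidableEq F]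
    (ψ : AddChar F ℂ) (hψ : ψ ≠ 1)
    (η : MulChar F ℂ) (hη : η ≠ 1) (hη2 : η ^ 2 = 1)
    (χ₀ χ : MulChar F ℂ) (hχ₀ : χ₀ ≠ 1)
    (S : ℂ)
    (hS : S = ∑ u : F, ∑ v : F, ∑ x₁ : F, ∑ x₂ : F, ∑ y₁ : F, ∑ y₂ : F,
      if x₁ * x₂ = u * v * y₁ * y₂ then
        χ₀ u * χ₀⁻¹ v * χ y₁ * η y₂ * ψ (x₁ + x₂ - y₁ - y₂) else 0) :
    (χ₀ ≠ η → S = 0) ∧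
    (χ₀ = η → S = -(η (-1)) * (Fintype.card F : ℂ) * ((Fintype.card F : ℂ) - 1) *
      ∑ t : F, η t * χ t * ψ (-t)) := by
  rw [show S = S₂' χ₀ χ η ψ from hS, S₂'_eq_mul_gaussSum hχ₀]
  refine ⟨fun hne ↦ ?_, fun heq ↦ ?_⟩
  · have hχ₀2 : χ₀ ^ 2 ≠ 1 := fun h ↦ hne (MulChar.eq_of_ne_one_of_sq_eq_one hχ₀ h hη hη2)
    rw [MulChar.sum_eq_zero_of_ne_one hχ₀2, zero_mul, zero_mul, zero_mul]
  · have hquad : η.IsQuadratic := MulChar.isQuadratic_iff_sq_eq_one.mpr hη2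
    rw [heq, hη2, MulChar.sum_one_eq_card_units, Fintype.card_units,
      Nat.cast_pred Fintype.card_pos, hquad.inv,
      gaussSum_sq hη hquad (AddChar.IsPrimitive.of_ne_one hψ), ← sq, hη2,
      gaussSum_one_left (inv_ne_one.mpr hψ)]
    simp only [gaussSum, MulChar.mul_apply, AddChar.inv_apply]
    ring

/-- Evaluation of the sum `S₂'` from the appendix: it vanishes unless `χ₀ = η`,
in which case it equals `−η(−1)·q·(q−1)·∑_t η(t)χ(t)ψ(−t)`. -/
theorem S2_sum_eval (F : Type*) [Field F] [Fintype F] [DecidableEq F]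
    (hq : Odd (Fintype.card F))
    (ψ : AddChar F ℂ) (hψ : ψ ≠ 1)
    (η : MulChar F ℂ) (hη : η ≠ 1) (hη2 : η ^ 2 = 1)
    (χ₀ χ : MulChar F ℂ) (hχ₀ : χ₀ ≠ 1) (hχ : χ ≠ 1)
    (S : ℂ)
    (hS : S = ∑ u : F, ∑ v : F, ∑ x₁ : F, ∑ x₂ : F, ∑ y₁ : F, ∑ y₂ : F,
      if x₁ * x₂ = u * v * y₁ * y₂ then
        χ₀ u * χ₀⁻¹ v * χ y₁ * η y₂ * ψ (x₁ + x₂ - y₁ - y₂) else 0) :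
    (χ₀ ≠ η → S = 0) ∧
    (χ₀ = η → S = -(η (-1)) * (Fintype.card F : ℂ) * ((Fintype.card F : ℂ) - 1) *
      ∑ t : F, η t * χ t * ψ (-t)) :=
  S2_sum_eval_general F ψ hψ η hη hη2 χ₀ χ hχ₀ S hS
end

section
/- Let ρ > 1 be a real number, let N ∈ ℕ, and let a : ℤ → ℂ satisfy a(n) = 0 for all n < −N. Let f : ℂ → ℂ be such that for every X ∈ ℂ with 0 < |X| < ρ the series ∑_{n ∈ ℤ} a(n)·Xⁿ converges (HasSum) to f(X). Define f₊(X) := ∑_{n ∈ ℕ} a(n)·Xⁿ. Then for every X with 0 < |X| < ρ and every ε with 0 < ε < min(1, ρ/|X|): f₊(X) = f(X) − (2πi)⁻¹ · ∮_{|z|=ε} f(X·z)/(1−z) dz, where ∮_{|z|=ε} denotes the circle integral over the circle of radius ε centered at 0 (Mathlib's circleIntegral). -/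
/-!
On the circle `|z| = ε` we have `0 < |X z| < ρ`, so `f (X z) = f₊ (X z) + P (X z)` where
`P w = ∑_{k < N} a (-(k+1)) w^{-(k+1)}` is the principal part. Since `ε < 1` and `|X| ε < ρ`,
`f₊ (X z) / (1 - z)` is holomorphic near the closed disc `|z| ≤ ε`, so its integral vanishes.
For the principal part, `∮ z^{-(k+1)} / (1 - z) dz = 2πi` for every `k`: the identity
`z^{m-1} / (1 - z) = z^m / (1 - z) + z^{m-1}` lowers the exponent one step at a time, picking up
the residue `2πi` only at the step from `m = 0`, where `∮ 1 / (1 - z) dz = 0`. Hence the integral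
equals `2πi P(X) = 2πi (f X - f₊ X)`.
-/

open Metric Complex Finset Real

theorem HasSum.nat_of_eq_zero_of_lt_neg {G : Type*} [AddCommGroup G] [TopologicalSpace G]
    [IsTopologicalAddGroup G] {b : ℤ → G} {s : G} {N : ℕ}
    (hb : ∀ n : ℤ, n < -(N : ℤ) → b n = 0) (h : HasSum b s) :
    HasSum (fun n : ℕ => b n) (s - ∑ k ∈ range N, b (-(k + 1))) := by
  have hneg : HasSum (fun n : ℕ => b (-(n + 1))) (∑ k ∈ range N, b (-(k + 1))) :=
    hasSum_sum_of_ne_finset_zero fun n hn => hb _ (by simp only [mem_range] at hn; omega)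
  simpa using h.nat_add_neg_add_one.sub hneg

theorem differentiableOn_tsum_mul_pow {c : ℕ → ℂ} {w : ℂ}
    (hc : Summable fun n => c n * w ^ n) :
    DifferentiableOn ℂ (fun z => ∑' n, c n * z ^ n) (ball 0 ‖w‖) := by
  have hnorm : Summable fun n => ‖c n‖ * ‖w‖ ^ n := by
    simpa only [norm_mul, norm_pow] using summable_norm_iff.2 hc
  refine differentiableOn_tsum_of_summable_norm hnorm (fun n => ?_) isOpen_ball fun n z hz => ?_
  · exact ((differentiable_id.pow n).const_mul (c n)).differentiableOn
  · rw [norm_mul, norm_pow]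
    gcongr
    exact (mem_ball_zero_iff.1 hz).le

theorem one_sub_ne_zero_of_norm_lt_one {z : ℂ} (hz : ‖z‖ < 1) : 1 - z ≠ 0 :=
  sub_ne_zero.2 fun h => by simp [← h] at hz

theorem diffContOnCl_comp_mul_div_one_sub {g : ℂ → ℂ} {R ε : ℝ} {X : ℂ} (hε1 : ε < 1)
    (hg : DifferentiableOn ℂ g (ball 0 R)) (hXε : ‖X‖ * ε < R) :
    DiffContOnCl ℂ (fun z => g (X * z) / (1 - z)) (ball 0 ε) := by
  refine DifferentiableOn.diffContOnCl_ball (U := ball 0 1 ∩ (X * ·) ⁻¹' ball 0 R) ?_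
    fun z hz => ⟨mem_ball_zero_iff.2 ((mem_closedBall_zero_iff.1 hz).trans_lt hε1), ?_⟩
  · exact (hg.comp (differentiableOn_id.const_mul X) fun z hz => hz.2).div
      ((differentiableOn_const 1).sub differentiableOn_id)
      fun z hz => one_sub_ne_zero_of_norm_lt_one (mem_ball_zero_iff.1 hz.1)
  · rw [Set.mem_preimage, mem_ball_zero_iff, norm_mul]
    exact (mul_le_mul_of_nonneg_left (mem_closedBall_zero_iff.1 hz) (norm_nonneg X)).trans_lt
      hXε

noncomputable def laurentPrincipalPart (a : ℤ → ℂ) (N : ℕ) (w : ℂ) : ℂ :=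
  ∑ k ∈ range N, a (-(k + 1)) * w ^ (-(k + 1 : ℤ))

theorem hasSum_nat_sub_laurentPrincipalPart {a : ℤ → ℂ} {N : ℕ}
    (ha : ∀ n : ℤ, n < -(N : ℤ) → a n = 0) {w s : ℂ}
    (h : HasSum (fun n : ℤ => a n * w ^ n) s) :
    HasSum (fun n : ℕ => a n * w ^ n) (s - laurentPrincipalPart a N w) := by
  simpa only [zpow_natCast, laurentPrincipalPart] using
    h.nat_of_eq_zero_of_lt_neg fun n hn => by simp [ha n hn]

theorem laurentPrincipalPart_mul_div_one_sub (a : ℤ → ℂ) (N : ℕ) (X z : ℂ) :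
    laurentPrincipalPart a N (X * z) / (1 - z) =
      ∑ k ∈ range N,
        a (-(k + 1)) * X ^ (-(k + 1 : ℤ)) * (z ^ (-(k + 1 : ℤ)) / (1 - z)) := by
  simp only [laurentPrincipalPart, sum_div, mul_zpow, mul_div_assoc, mul_assoc]

section SmallCircle

variable {ε : ℝ} (hε0 : 0 < ε) (hε1 : ε < 1)
include hε0 hε1

theorem circleIntegrable_zpow_div_one_sub (m : ℤ) :
    CircleIntegrable (fun z : ℂ => z ^ m / (1 - z)) 0 ε := by
  refine ContinuousOn.circleIntegrable hε0.le ?_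
  refine (continuousOn_id.zpow₀ m fun z hz => Or.inl ?_).div
    (continuousOn_const.sub continuousOn_id) fun z hz => ?_
  · exact ne_zero_of_mem_sphere hε0.ne' ⟨z, hz⟩
  · exact one_sub_ne_zero_of_norm_lt_one ((mem_sphere_zero_iff_norm.1 hz).trans_lt hε1)

theorem circleIntegral_zpow_sub_one_div_one_sub (m : ℤ) :
    (∮ z in C(0, ε), z ^ (m - 1) / (1 - z)) =
      (∮ z in C(0, ε), z ^ m / (1 - z)) + ∮ z in C(0, ε), z ^ (m - 1) := by
  have hsplit : Set.EqOn (fun z : ℂ => z ^ (m - 1) / (1 - z))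
      (fun z => z ^ m / (1 - z) + z ^ (m - 1)) (sphere 0 ε) := fun z hz => by
    have hz0 : z ≠ 0 := ne_zero_of_mem_sphere hε0.ne' ⟨z, hz⟩
    have hz1 := one_sub_ne_zero_of_norm_lt_one ((mem_sphere_zero_iff_norm.1 hz).trans_lt hε1)
    simp only [zpow_sub_one₀ hz0]
    field_simp
    ring
  rw [circleIntegral.integral_congr hε0.le hsplit, circleIntegral.integral_add
    (circleIntegrable_zpow_div_one_sub hε0 hε1 m)]
  exact ContinuousOn.circleIntegrable hε0.le
    (continuousOn_id.zpow₀ _ fun z hz => Or.inl (ne_zero_of_mem_sphere hε0.ne' ⟨z, hz⟩))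

theorem circleIntegral_zpow_neg_succ_div_one_sub (k : ℕ) :
    (∮ z in C(0, ε), z ^ (-(k + 1 : ℤ)) / (1 - z)) = 2 * π * I := by
  induction k with
  | zero =>
    have hholo : (∮ z in C(0, ε), (1 - z)⁻¹) = 0 := by
      refine DiffContOnCl.circleIntegral_eq_zero hε0.le <|
        DifferentiableOn.diffContOnCl_ball ?_ (closedBall_subset_ball hε1)
      exact ((differentiableOn_const _).sub differentiableOn_id).inv
        fun z hz => one_sub_ne_zero_of_norm_lt_one (mem_ball_zero_iff.1 hz)
    have hres : (∮ z in C(0, ε), z⁻¹) = 2 * π * I := by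
      simpa using circleIntegral.integral_sub_inv_of_mem_ball (mem_ball_self (x := (0 : ℂ)) hε0)
    simpa [hholo, hres] using circleIntegral_zpow_sub_one_div_one_sub hε0 hε1 0
  | succ k ih =>
    have hres : (∮ z in C(0, ε), z ^ (-(k + 1 : ℤ) - 1)) = 0 := by
      simpa using circleIntegral.integral_sub_zpow_of_ne (by omega) (0 : ℂ) 0 ε
    rw [show -((k + 1 : ℕ) + 1 : ℤ) = -(k + 1 : ℤ) - 1 by push_cast; ring,
      circleIntegral_zpow_sub_one_div_one_sub hε0 hε1, ih, hres, add_zero]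

theorem circleIntegrable_const_mul_zpow_div_one_sub (c : ℂ) (m : ℤ) :
    CircleIntegrable (fun z : ℂ => c * (z ^ m / (1 - z))) 0 ε :=
  (circleIntegrable_zpow_div_one_sub hε0 hε1 m).const_smul

theorem circleIntegrable_laurentPrincipalPart_mul_div_one_sub
    (a : ℤ → ℂ) (N : ℕ) (X : ℂ) :
    CircleIntegrable (fun z => laurentPrincipalPart a N (X * z) / (1 - z)) 0 ε := by
  simp only [laurentPrincipalPart_mul_div_one_sub]
  exact .fun_sum _ fun k _ => circleIntegrable_const_mul_zpow_div_one_sub hε0 hε1 _ _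

theorem circleIntegral_laurentPrincipalPart_mul_div_one_sub (a : ℤ → ℂ) (N : ℕ) (X : ℂ) :
    (∮ z in C(0, ε), laurentPrincipalPart a N (X * z) / (1 - z)) =
      2 * π * I * laurentPrincipalPart a N X := by
  simp only [laurentPrincipalPart_mul_div_one_sub]
  rw [circleIntegral.integral_fun_sum fun k _ =>
    circleIntegrable_const_mul_zpow_div_one_sub hε0 hε1 _ _]
  simp only [circleIntegral.integral_const_mul, circleIntegral_zpow_neg_succ_div_one_sub hε0 hε1,
    laurentPrincipalPart, mul_sum]
  exact sum_congr rfl fun k _ => by ring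

end SmallCircle

theorem laurent_truncation_small_circle_general
    (ρ : ℝ) (N : ℕ) (a : ℤ → ℂ)
    (ha : ∀ n : ℤ, n < -(N : ℤ) → a n = 0)
    (f : ℂ → ℂ)
    (hf : ∀ X : ℂ, 0 < ‖X‖ → ‖X‖ < ρ → HasSum (fun n : ℤ => a n * X ^ n) (f X))
    (X : ℂ) (hX0 : 0 < ‖X‖) (hXρ : ‖X‖ < ρ)
    (ε : ℝ) (hε0 : 0 < ε) (hε : ε < min 1 (ρ / ‖X‖)) :
    (∑' n : ℕ, a (n : ℤ) * X ^ n)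
      = f X - (2 * (Real.pi : ℂ) * Complex.I)⁻¹ *
          ∮ z in C(0, ε), f (X * z) / (1 - z) := by
  obtain ⟨hε1, hερ⟩ := lt_min_iff.1 hε
  have hXε : ‖X‖ * ε < ρ := (lt_div_iff₀' hX0).1 hερ
  obtain ⟨R, hXεR, hRρ⟩ := exists_between hXε
  have hR0 : 0 < R := (by positivity : 0 ≤ ‖X‖ * ε).trans_lt hXεR
  have hR : ‖(R : ℂ)‖ = R := by simp [hR0.le]
  set g : ℂ → ℂ := fun w => ∑' n : ℕ, a n * w ^ n
  have hsplit :
      ∀ w : ℂ, 0 < ‖w‖ → ‖w‖ < ρ → f w = g w + laurentPrincipalPart a N w :=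
    fun w hw0 hwρ => by
      rw [show g w = _ from (hasSum_nat_sub_laurentPrincipalPart ha (hf w hw0 hwρ)).tsum_eq,
        sub_add_cancel]
  have hg : DifferentiableOn ℂ g (ball 0 R) := hR ▸ differentiableOn_tsum_mul_pow
    (hasSum_nat_sub_laurentPrincipalPart ha (hf R (by rwa [hR]) (by rwa [hR]))).summable
  have hregular := diffContOnCl_comp_mul_div_one_sub hε1 hg hXεR
  have hintegrand : Set.EqOn (fun z => f (X * z) / (1 - z))
      (fun z => g (X * z) / (1 - z) + laurentPrincipalPart a N (X * z) / (1 - z)) (sphere 0 ε) :=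
    fun z hz => by
      have hXz : ‖X * z‖ = ‖X‖ * ε := by rw [norm_mul, mem_sphere_zero_iff_norm.1 hz]
      simp only [hsplit _ (hXz ▸ by positivity) (hXz ▸ hXε), add_div]
  rw [circleIntegral.integral_congr hε0.le hintegrand, circleIntegral.integral_add
    ((hregular.continuousOn_ball.mono sphere_subset_closedBall).circleIntegrable hε0.le)
    (circleIntegrable_laurentPrincipalPart_mul_div_one_sub hε0 hε1 a N X),
    hregular.circleIntegral_eq_zero hε0.le, zero_add,
    circleIntegral_laurentPrincipalPart_mul_div_one_sub hε0 hε1, hsplit X hX0 hXρ]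
  field_simp
  ring

/-- Truncation of a Laurent series to its nonnegative part via a small circle
integral: for `0 < |X| < ρ` and `0 < ε < min(1, ρ/|X|)`,
`f₊(X) = f(X) − (2πi)⁻¹ ∮_{|z|=ε} f(Xz)/(1−z) dz`. -/
theorem laurent_truncation_small_circle
    (ρ : ℝ) (hρ : 1 < ρ) (N : ℕ) (a : ℤ → ℂ)
    (ha : ∀ n : ℤ, n < -(N : ℤ) → a n = 0)
    (f : ℂ → ℂ)
    (hf : ∀ X : ℂ, 0 < ‖X‖ → ‖X‖ < ρ → HasSum (fun n : ℤ => a n * X ^ n) (f X))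
    (X : ℂ) (hX0 : 0 < ‖X‖) (hXρ : ‖X‖ < ρ)
    (ε : ℝ) (hε0 : 0 < ε) (hε : ε < min 1 (ρ / ‖X‖)) :
    (∑' n : ℕ, a (n : ℤ) * X ^ n)
      = f X - (2 * (Real.pi : ℂ) * Complex.I)⁻¹ *
          ∮ z in C(0, ε), f (X * z) / (1 - z) :=
  laurent_truncation_small_circle_general ρ N a ha f hf X hX0 hXρ ε hε0 hε
end

section
/- There exists an absolute constant C > 0 with the following property. Let ρ > 1 be a real number, N ∈ ℕ, and let a : ℤ → ℂ satisfy a(n) = 0 for all n < −N; assume that for every X ∈ ℂ with 0 < |X| < ρ the family n ↦ a(n)·Xⁿ (n ∈ ℤ) is absolutely summable. Then for every k ∈ ℕ and every X with 0 < |X| < ρ: |∑_{n ∈ ℕ} nᵏ·a(n)·Xⁿ| ≤ C·( |∑_{n ∈ ℤ} nᵏ·a(n)·Xⁿ| + sup_{|z|=1} |∑_{n ∈ ℤ} n^{k+1}·a(n)·(X·z)ⁿ| ). (Here the weighted series ∑_{n ∈ ℤ} nʲ·a(n)·Xⁿ converge absolutely on the open annulus; the sums are interpreted as tsums.) -/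
/-!
Write `f n = n ^ k a(n) X ^ n` and `g θ = ∑ₙ n f(n) e^{inθ}`, so that `sup |g|` is the supremum in
the statement and `n f(n)` are the Fourier coefficients of `g`. The negative part of the series is
`∑_{m=1}^N f(-m) = -∑_{m=1}^N ĝ(-m) / m`. For `s < 1`, pairing `g` with
`log (1 - s e^{iθ}) = -∑_{m ≥ 1} s^m e^{imθ} / m` gives `-2π ∑ s^m ĝ(-m) / m`, and for
`1/2 ≤ s ≤ 1` this kernel is dominated by `π + log 2 - log sin (θ/2)`, whose integral over
`[0, 2π]` is `2π (π + 2 log 2)`. Letting `s → 1` bounds the negative part by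
`(π + 2 log 2) sup |g|`, so `C = π + 2 log 2` works.
-/

open MeasureTheory Set Filter
open scoped Real Topology

namespace LaurentTruncation

noncomputable def logKernelMajorant (θ : ℝ) : ℝ :=
  π + Real.log 2 - Real.log (Real.sin (θ / 2))

lemma intervalIntegrable_log_sin_half (a b : ℝ) :
    IntervalIntegrable (fun θ => Real.log (Real.sin (θ / 2))) volume a b := by
  have h := (intervalIntegrable_log_sin (a := a / 2) (b := b / 2)).comp_mul_left (c := 1 / 2)
  convert h using 2 <;> simp only [Function.comp_def, one_div, div_inv_eq_mul] <;> ring_nf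

lemma integral_logKernelMajorant :
    ∫ θ in (0)..(2 * π), logKernelMajorant θ = 2 * π * (π + 2 * Real.log 2) := by
  have hlog : ∫ θ in (0)..(2 * π), Real.log (Real.sin (θ / 2)) = -2 * π * Real.log 2 := by
    rw [intervalIntegral.integral_comp_div (fun x => Real.log (Real.sin x)) two_ne_zero]
    simp only [zero_div, mul_div_cancel_left₀ π two_ne_zero, integral_log_sin_zero_pi, smul_eq_mul]
    ring
  unfold logKernelMajorant
  rw [intervalIntegral.integral_sub intervalIntegrable_const
    (intervalIntegrable_log_sin_half _ _), hlog, intervalIntegral.integral_const, smul_eq_mul]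
  ring

lemma integrableOn_logKernelMajorant : IntegrableOn logKernelMajorant (Ioc 0 (2 * π)) :=
  (intervalIntegrable_iff_integrableOn_Ioc_of_le (by positivity)).mp
    (intervalIntegrable_const.sub (intervalIntegrable_log_sin_half _ _))

lemma norm_log_one_sub_mul_exp_le {s θ : ℝ} (hs : s ∈ Icc (1 / 2 : ℝ) 1)
    (hθ : Real.sin (θ / 2) ≠ 0) :
    ‖Complex.log (1 - s * Complex.exp (θ * Complex.I))‖ ≤ logKernelMajorant θ := by
  obtain ⟨hs₁, hs₂⟩ := hs
  set w : ℂ := 1 - s * Complex.exp (θ * Complex.I)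
  have hw_sq : ‖w‖ ^ 2 = (1 - s) ^ 2 + 4 * s * Real.sin (θ / 2) ^ 2 := by
    have hcos : Real.cos θ = 1 - 2 * Real.sin (θ / 2) ^ 2 := by
      have h := Real.cos_two_mul (θ / 2)
      rw [mul_div_cancel₀ θ two_ne_zero, Real.cos_sq'] at h
      linarith
    rw [Complex.sq_norm, Complex.normSq_apply]
    simp only [w, Complex.sub_re, Complex.sub_im, Complex.one_re, Complex.one_im,
      Complex.re_ofReal_mul, Complex.im_ofReal_mul, Complex.exp_ofReal_mul_I_re,
      Complex.exp_ofReal_mul_I_im]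
    nlinarith [Real.sin_sq_add_cos_sq θ]
  have hw_le : ‖w‖ ≤ 2 := by
    calc ‖w‖ ≤ ‖(1 : ℂ)‖ + ‖(s : ℂ) * Complex.exp (θ * Complex.I)‖ := norm_sub_le _ _
      _ ≤ 2 := by
        rw [norm_mul, Complex.norm_exp_ofReal_mul_I, Complex.norm_real, Real.norm_of_nonneg
          (by linarith)]
        norm_num; linarith
  have hw_ge : |Real.sin (θ / 2)| ≤ ‖w‖ :=
    abs_le_of_sq_le_sq (by nlinarith [sq_nonneg (Real.sin (θ / 2))]) (norm_nonneg w)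
  have hsin_pos : 0 < |Real.sin (θ / 2)| := abs_pos.mpr hθ
  have hlog_sin : Real.log (Real.sin (θ / 2)) ≤ 0 := by
    rw [← Real.log_abs]; exact Real.log_nonpos (abs_nonneg _) (Real.abs_sin_le_one _)
  have hlog_norm : |Real.log ‖w‖| ≤ Real.log 2 - Real.log (Real.sin (θ / 2)) := by
    have hlo := Real.log_le_log hsin_pos hw_ge
    have hhi := Real.log_le_log (hsin_pos.trans_le hw_ge) hw_le
    rw [Real.log_abs] at hlo
    rw [abs_le]; constructor <;> linarith [Real.log_nonneg (one_le_two : (1 : ℝ) ≤ 2)]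
  calc ‖Complex.log w‖ ≤ |(Complex.log w).re| + |(Complex.log w).im| :=
        Complex.norm_le_abs_re_add_abs_im _
    _ ≤ _ := by
      rw [Complex.log_re, Complex.log_im, logKernelMajorant]
      linarith [Complex.abs_arg_le_pi w]

lemma integral_exp_mul_I_zpow (q : ℤ) :
    ∫ θ in Ioc 0 (2 * π), Complex.exp (θ * Complex.I) ^ q = if q = 0 then (2 * π : ℂ) else 0 := by
  rw [← intervalIntegral.integral_of_le (by positivity)]
  split_ifs with hq
  · simp [hq]
  · have hexp (θ : ℝ) : Complex.exp (θ * Complex.I) ^ q = Complex.exp ((q * Complex.I) * θ) := by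
      rw [← Complex.exp_int_mul]; ring_nf
    simp_rw [hexp]
    have h2π : (q * Complex.I) * ((2 * π : ℝ) : ℂ) = q * (2 * π * Complex.I) := by push_cast; ring
    rw [integral_exp_mul_complex (by simp [hq]), h2π, Complex.exp_int_mul_two_pi_mul_I]
    simp

lemma continuous_log_one_sub_mul_exp {s : ℝ} (hs : |s| < 1) :
    Continuous fun θ : ℝ => Complex.log (1 - s * Complex.exp (θ * Complex.I)) := by
  refine continuous_iff_continuousAt.mpr fun θ => (continuousAt_clog ?_).comp (by fun_prop)
  rw [sub_eq_add_neg]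
  refine Complex.mem_slitPlane_of_norm_lt_one ?_
  rwa [norm_neg, norm_mul, Complex.norm_exp_ofReal_mul_I, mul_one, Complex.norm_real]

lemma integral_exp_zpow_mul_log_one_sub {s : ℝ} (hs₀ : 0 ≤ s) (hs₁ : s < 1) (n : ℤ) :
    ∫ θ in Ioc 0 (2 * π),
        Complex.exp (θ * Complex.I) ^ n * Complex.log (1 - s * Complex.exp (θ * Complex.I)) =
      ∑' m : ℕ, -((s : ℂ) ^ m / m) * if n + m = 0 then (2 * π : ℂ) else 0 := by
  set e : ℝ → ℂ := fun θ => Complex.exp (θ * Complex.I)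
  have he : Continuous e := by fun_prop
  have he_norm (θ : ℝ) : ‖e θ‖ = 1 := Complex.norm_exp_ofReal_mul_I θ
  have he_ne (θ : ℝ) : e θ ≠ 0 := Complex.exp_ne_zero _
  have hse_norm (θ : ℝ) : ‖(s : ℂ) * e θ‖ = s := by
    rw [norm_mul, he_norm, mul_one, Complex.norm_real, Real.norm_of_nonneg hs₀]
  set F : ℕ → ℝ → ℂ := fun m θ => -((s : ℂ) ^ m / m) * e θ ^ (n + m)
  have hF (θ : ℝ) : HasSum (F · θ) (e θ ^ n * Complex.log (1 - s * e θ)) := by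
    have h := ((Complex.hasSum_taylorSeries_neg_log
      ((hse_norm θ).trans_lt hs₁)).mul_left (e θ ^ n)).neg
    rw [mul_neg, neg_neg] at h
    refine h.congr_fun fun m => ?_
    simp only [F, zpow_add₀ (he_ne θ), zpow_natCast, mul_pow]
    ring
  have hF_int (m : ℕ) : Integrable (F m) (volume.restrict (Ioc 0 (2 * π))) :=
    (continuous_const.mul (he.zpow₀ _ fun θ => Or.inl (he_ne θ))).integrableOn_Ioc
  have hF_norm (m : ℕ) : ∫ θ in Ioc 0 (2 * π), ‖F m θ‖ = 2 * π * (s ^ m / m) := by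
    simp [F, he_norm, abs_of_nonneg hs₀, Real.pi_pos.le]
  have hF_sum : Summable fun m => ∫ θ in Ioc 0 (2 * π), ‖F m θ‖ := by
    simp_rw [hF_norm]
    refine ((summable_geometric_of_lt_one hs₀ hs₁).mul_left (2 * π)).of_nonneg_of_le
      (fun m => by positivity) fun m => mul_le_mul_of_nonneg_left ?_ (by positivity)
    exact div_nat_le_self_of_nonnneg (pow_nonneg hs₀ m) m
  rw [← integral_congr_ae (ae_of_all _ fun θ => (hF θ).tsum_eq),
    ← integral_tsum_of_summable_integral_norm hF_int hF_sum]
  congr 1 with m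
  rw [integral_const_mul, integral_exp_mul_I_zpow]

lemma integral_exp_natCast_zpow_mul_log_one_sub {s : ℝ} (hs₀ : 0 ≤ s) (hs₁ : s < 1) (n : ℕ) :
    ∫ θ in Ioc 0 (2 * π), Complex.exp (θ * Complex.I) ^ (n : ℤ) *
      Complex.log (1 - s * Complex.exp (θ * Complex.I)) = 0 := by
  rw [integral_exp_zpow_mul_log_one_sub hs₀ hs₁]
  refine (tsum_congr fun m => ?_).trans tsum_zero
  -- only `m = 0` pairs with `n`, and that term is `s ^ 0 / 0 = 0`
  rcases eq_or_ne m 0 with rfl | hm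
  · simp
  · rw [if_neg (by omega), mul_zero]

lemma integral_exp_neg_succ_zpow_mul_log_one_sub {s : ℝ} (hs₀ : 0 ≤ s) (hs₁ : s < 1) (m : ℕ) :
    ∫ θ in Ioc 0 (2 * π), Complex.exp (θ * Complex.I) ^ (-((m : ℤ) + 1)) *
      Complex.log (1 - s * Complex.exp (θ * Complex.I)) = -(2 * π) * (s ^ (m + 1) / (m + 1)) := by
  rw [integral_exp_zpow_mul_log_one_sub hs₀ hs₁, tsum_eq_single (m + 1) fun j hj => ?_]
  · push_cast
    simp only [neg_add_cancel, if_true]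
    ring
  · rw [if_neg (by omega), mul_zero]

lemma integral_tsum_exp_zpow_mul_log_one_sub {c : ℤ → ℂ} {N : ℕ} (hc : Summable (‖c ·‖))
    (hN : ∀ n < -(N : ℤ), c n = 0) {s : ℝ} (hs₀ : 0 ≤ s) (hs₁ : s < 1) :
    ∫ θ in Ioc 0 (2 * π), (∑' n : ℤ, c n * Complex.exp (θ * Complex.I) ^ n) *
        Complex.log (1 - s * Complex.exp (θ * Complex.I)) =
      -(2 * π) * ∑ m ∈ Finset.range N, (s : ℂ) ^ (m + 1) * (c (-(m + 1)) / (m + 1)) := by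
  set e : ℝ → ℂ := fun θ => Complex.exp (θ * Complex.I)
  set K : ℝ → ℂ := fun θ => Complex.log (1 - s * e θ)
  have he_ne (θ : ℝ) : e θ ≠ 0 := Complex.exp_ne_zero _
  have hK : Continuous K := continuous_log_one_sub_mul_exp (by rwa [abs_of_nonneg hs₀])
  set G : ℤ → ℝ → ℂ := fun n θ => c n * (e θ ^ n * K θ)
  have hG_int (n : ℤ) : Integrable (G n) (volume.restrict (Ioc 0 (2 * π))) :=
    (continuous_const.mul (((by fun_prop : Continuous e).zpow₀ _
      fun θ => Or.inl (he_ne θ)).mul hK)).integrableOn_Ioc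
  have hG_sum : Summable fun n => ∫ θ in Ioc 0 (2 * π), ‖G n θ‖ := by
    have hG_norm (n : ℤ) (θ : ℝ) : ‖G n θ‖ = ‖c n‖ * ‖K θ‖ := by
      simp [G, e, Complex.norm_exp_ofReal_mul_I]
    simp_rw [hG_norm, integral_const_mul]
    exact hc.mul_right _
  have hsum : HasSum (fun n => ∫ θ in Ioc 0 (2 * π), G n θ)
      (0 + ∑ m ∈ Finset.range N, c (-(m + 1)) * (-(2 * π) * (s ^ (m + 1) / (m + 1)))) := by
    simp only [G, integral_const_mul]
    refine HasSum.of_nat_of_neg_add_one ?_ ?_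
    · simp only [e, K, integral_exp_natCast_zpow_mul_log_one_sub hs₀ hs₁, mul_zero]
      exact hasSum_zero
    · simp only [e, K, integral_exp_neg_succ_zpow_mul_log_one_sub hs₀ hs₁]
      exact hasSum_sum_of_ne_finset_zero fun m hm => by
        rw [hN _ (by simp at hm; omega), zero_mul]
  have hG_tsum (θ : ℝ) : (∑' n, c n * e θ ^ n) * K θ = ∑' n, G n θ := by
    rw [← tsum_mul_right]
    simp only [G, mul_assoc]
  rw [integral_congr_ae (ae_of_all _ hG_tsum), ← integral_tsum_of_summable_integral_norm hG_int
    hG_sum, hsum.tsum_eq, zero_add, Finset.mul_sum]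
  exact Finset.sum_congr rfl fun m _ => by ring

lemma norm_integral_mul_log_one_sub_le {f : ℝ → ℂ} {M : ℝ} (hf : ∀ θ, ‖f θ‖ ≤ M)
    {s : ℝ} (hs : s ∈ Icc (1 / 2 : ℝ) 1) :
    ‖∫ θ in Ioc 0 (2 * π), f θ * Complex.log (1 - s * Complex.exp (θ * Complex.I))‖ ≤
      2 * π * (π + 2 * Real.log 2) * M := by
  have hM : 0 ≤ M := (norm_nonneg _).trans (hf 0)
  have hbound : ∀ᵐ θ ∂volume.restrict (Ioc 0 (2 * π)),
      ‖f θ * Complex.log (1 - s * Complex.exp (θ * Complex.I))‖ ≤ M * logKernelMajorant θ := by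
    rw [← Measure.restrict_congr_set Ioo_ae_eq_Ioc]
    refine ae_restrict_of_forall_mem measurableSet_Ioo fun θ hθ => ?_
    have hsin : Real.sin (θ / 2) ≠ 0 :=
      (Real.sin_pos_of_pos_of_lt_pi (by linarith [hθ.1]) (by linarith [hθ.2])).ne'
    rw [norm_mul]
    exact mul_le_mul (hf θ) (norm_log_one_sub_mul_exp_le hs hsin) (norm_nonneg _) hM
  refine (norm_integral_le_of_norm_le (integrableOn_logKernelMajorant.const_mul M)
    hbound).trans_eq ?_
  rw [integral_const_mul, ← intervalIntegral.integral_of_le (by positivity),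
    integral_logKernelMajorant]
  ring

theorem norm_sum_neg_coeff_div_le {c : ℤ → ℂ} {N : ℕ} (hc : Summable (‖c ·‖))
    (hN : ∀ n < -(N : ℤ), c n = 0) {M : ℝ}
    (hM : ∀ θ : ℝ, ‖∑' n : ℤ, c n * Complex.exp (θ * Complex.I) ^ n‖ ≤ M) :
    ‖∑ m ∈ Finset.range N, c (-(m + 1)) / (m + 1)‖ ≤ (π + 2 * Real.log 2) * M := by
  set S : ℝ → ℂ := fun s => ∑ m ∈ Finset.range N, (s : ℂ) ^ (m + 1) * (c (-(m + 1)) / (m + 1))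
  have hS_le {s : ℝ} (hs : s ∈ Ico (1 / 2 : ℝ) 1) : ‖S s‖ ≤ (π + 2 * Real.log 2) * M := by
    have h := norm_integral_mul_log_one_sub_le hM (Ico_subset_Icc_self hs)
    rw [integral_tsum_exp_zpow_mul_log_one_sub hc hN (by linarith [hs.1]) hs.2, norm_mul,
      norm_neg, show ‖(2 * π : ℂ)‖ = 2 * π by simp [Real.pi_pos.le]] at h
    exact le_of_mul_le_mul_left (h.trans_eq (by ring)) (by positivity)
  have hS_lim : Tendsto S (𝓝[<] 1) (𝓝 (∑ m ∈ Finset.range N, c (-(m + 1)) / (m + 1))) := by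
    have hS : Continuous S := by fun_prop
    simpa [S] using (hS.tendsto 1).mono_left nhdsWithin_le_nhds
  exact le_of_tendsto hS_lim.norm
    (eventually_of_mem (Ico_mem_nhdsLT (by norm_num)) fun s hs => hS_le hs)

lemma summable_norm_pow_mul_mul_zpow {a : ℤ → ℂ} {N : ℕ} (hN : ∀ n < -(N : ℤ), a n = 0) {R : ℝ}
    (hR : Summable fun n : ℤ => ‖a n * (R : ℂ) ^ n‖) {w : ℂ} (hw : ‖w‖ < R) (j : ℕ) :
    Summable fun n : ℤ => ‖(n : ℂ) ^ j * a n * w ^ n‖ := by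
  have hR₀ : 0 < R := (norm_nonneg w).trans_lt hw
  have hq : ‖‖w‖ / R‖ < 1 := by
    rwa [Real.norm_of_nonneg (by positivity), div_lt_one hR₀]
  set B := ∑' n : ℤ, ‖a n * (R : ℂ) ^ n‖
  refine Summable.of_nat_of_neg_add_one ?_
    (summable_of_ne_finset_zero (s := Finset.range N) fun m hm => ?_)
  · refine ((summable_pow_mul_geometric_of_norm_lt_one j hq).mul_right B).of_nonneg_of_le
      (fun _ => norm_nonneg _) fun n => ?_
    calc ‖((n : ℤ) : ℂ) ^ j * a n * w ^ (n : ℤ)‖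
        = (n : ℝ) ^ j * (‖w‖ / R) ^ n * ‖a n * (R : ℂ) ^ (n : ℤ)‖ := by
          simp only [Int.cast_natCast, zpow_natCast, norm_mul, norm_pow, Complex.norm_natCast,
            Complex.norm_real, Real.norm_of_nonneg hR₀.le, div_pow]
          field_simp
      _ ≤ (n : ℝ) ^ j * (‖w‖ / R) ^ n * B :=
          mul_le_mul_of_nonneg_left (hR.le_tsum _ fun _ _ => norm_nonneg _) (by positivity)
  · rw [hN _ (by simp at hm; omega)]
    simp

lemma tsum_nat_eq_tsum_sub_sum_neg {E : Type*} [NormedAddCommGroup E] [CompleteSpace E]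
    {f : ℤ → E} (hf : Summable f) {N : ℕ} (hN : ∀ n < -(N : ℤ), f n = 0) :
    ∑' n : ℕ, f n = ∑' n : ℤ, f n - ∑ m ∈ Finset.range N, f (-(m + 1)) := by
  rw [tsum_of_nat_of_neg_add_one (hf.comp_injective Nat.cast_injective)
    (hf.comp_injective fun m m' h => by omega),
    tsum_eq_sum (f := fun m : ℕ => f (-(m + 1))) (s := Finset.range N)
      fun m hm => hN _ (by simp at hm; omega)]
  abel

lemma norm_tsum_mul_exp_zpow_le_iSup {c : ℤ → ℂ} (hc : Summable (‖c ·‖)) (θ : ℝ) :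
    ‖∑' n : ℤ, c n * Complex.exp (θ * Complex.I) ^ n‖ ≤
      ⨆ z : {z : ℂ // ‖z‖ = 1}, ‖∑' n : ℤ, c n * (z : ℂ) ^ n‖ := by
  have hz {z : ℂ} (hz : ‖z‖ = 1) (n : ℤ) : ‖c n * z ^ n‖ = ‖c n‖ := by
    rw [norm_mul, norm_zpow, hz, one_zpow, mul_one]
  have hbdd : BddAbove (range fun z : {z : ℂ // ‖z‖ = 1} => ‖∑' n : ℤ, c n * (z : ℂ) ^ n‖) := by
    refine ⟨∑' n, ‖c n‖, ?_⟩
    rintro _ ⟨z, rfl⟩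
    simpa only [hz z.2] using norm_tsum_le_tsum_norm (hc.congr fun n => (hz z.2 n).symm)
  exact le_ciSup hbdd ⟨_, Complex.norm_exp_ofReal_mul_I θ⟩

theorem norm_tsum_nat_le {f : ℤ → ℂ} {N : ℕ} (hf : Summable f)
    (hf' : Summable fun n : ℤ => ‖(n : ℂ) * f n‖) (hN : ∀ n < -(N : ℤ), f n = 0) {M : ℝ}
    (hM : ∀ θ : ℝ, ‖∑' n : ℤ, (n : ℂ) * f n * Complex.exp (θ * Complex.I) ^ n‖ ≤ M) :
    ‖∑' n : ℕ, f n‖ ≤ ‖∑' n : ℤ, f n‖ + (π + 2 * Real.log 2) * M := by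
  have hneg := norm_sum_neg_coeff_div_le (N := N) hf' (fun n hn => by simp [hN n hn]) hM
  have hcoeff (m : ℕ) : f (-(m + 1)) = -(((-(m + 1) : ℤ) : ℂ) * f (-(m + 1)) / (m + 1)) := by
    push_cast
    field_simp
  rw [tsum_nat_eq_tsum_sub_sum_neg hf hN, Finset.sum_congr rfl fun m _ => hcoeff m,
    Finset.sum_neg_distrib, sub_neg_eq_add]
  exact norm_add_le_of_le le_rfl hneg

end LaurentTruncation

open LaurentTruncation in
/-- Uniform bound for the nonnegative part of a Laurent series in terms of the
Euler-operator derivatives of the full series: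
`|D^k f₊(X)| ≤ C·(|D^k f(X)| + sup_{|z|=1} |D^{k+1} f(Xz)|)` on the annulus. -/
theorem laurent_truncation_bound :
    ∃ C : ℝ, 0 < C ∧
      ∀ (ρ : ℝ), 1 < ρ → ∀ (N : ℕ) (a : ℤ → ℂ),
        (∀ n : ℤ, n < -(N : ℤ) → a n = 0) →
        (∀ X : ℂ, 0 < ‖X‖ → ‖X‖ < ρ → Summable fun n : ℤ => ‖a n * X ^ n‖) →
        ∀ (k : ℕ) (X : ℂ), 0 < ‖X‖ → ‖X‖ < ρ →
          ‖∑' n : ℕ, (n : ℂ) ^ k * a (n : ℤ) * X ^ n‖ ≤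
            C * (‖∑' n : ℤ, (n : ℂ) ^ k * a n * X ^ n‖ +
              ⨆ z : {z : ℂ // ‖z‖ = 1},
                ‖∑' n : ℤ, (n : ℂ) ^ (k + 1) * a n * (X * (z : ℂ)) ^ n‖) := by
  refine ⟨π + 2 * Real.log 2, by positivity, fun ρ _ N a ha hsum k X _ hXρ => ?_⟩
  obtain ⟨R, hXR, hRρ⟩ := exists_between hXρ
  have hR₀ : 0 < R := (norm_nonneg X).trans_lt hXR
  have hR : Summable fun n : ℤ => ‖a n * (R : ℂ) ^ n‖ := by
    apply hsum <;> simpa [abs_of_pos hR₀]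
  set f : ℤ → ℂ := fun n => (n : ℂ) ^ k * a n * X ^ n
  have hEuler (n : ℤ) (z : ℂ) : (n : ℂ) ^ (k + 1) * a n * (X * z) ^ n = n * f n * z ^ n := by
    rw [mul_zpow]; ring
  have hf' : Summable fun n : ℤ => ‖(n : ℂ) * f n‖ := by
    refine (summable_norm_pow_mul_mul_zpow ha hR hXR (k + 1)).congr fun n => ?_
    simp only [f]
    ring_nf
  have h := norm_tsum_nat_le (N := N) (summable_norm_pow_mul_mul_zpow ha hR hXR k).of_norm hf'
    (fun n hn => by simp [ha n hn]) (norm_tsum_mul_exp_zpow_le_iSup hf')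
  simp only [Int.cast_natCast, zpow_natCast] at h
  simp only [hEuler]
  refine h.trans ?_
  nlinarith [Real.pi_gt_three, Real.log_nonneg one_le_two, norm_nonneg (∑' n, f n)]
end

section
/- Let p be an odd prime, n ≥ 1 an integer, and t ∈ ℚ_p with t ≠ 0. Then ‖t − t⁻¹‖_p ≤ p^{−n} if and only if ‖t − 1‖_p ≤ p^{−n} or ‖t + 1‖_p ≤ p^{−n}. -/
/-!
Since `t - t⁻¹ = (t - 1)(t + 1)/t`, everything reduces to the unit case: if `‖t‖ ≠ 1` the
ultrametric inequality is an equality and `‖t - t⁻¹‖ = max ‖t‖ ‖t‖⁻¹ > 1`. For a unit `t`, the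
factors `t - 1` and `t + 1` have norm at most `1` and differ by `2`, a unit when `p` is odd, so
one of them is a unit and `‖t - t⁻¹‖` is the norm of the other.
-/
open IsUltrametricDist

lemma IsUltrametricDist.norm_eq_of_norm_sub_lt {E : Type*} [SeminormedAddCommGroup E]
    [IsUltrametricDist E] {x y : E} (h : ‖x - y‖ < ‖y‖) : ‖x‖ = ‖y‖ := by
  rw [← sub_add_cancel x y, norm_add_eq_max_of_norm_ne_norm h.ne, max_eq_right h.le]

section NormedField

variable {K : Type*} [NormedField K]

lemma norm_self_sub_inv_of_norm_eq_one {t : K} (ht : ‖t‖ = 1) :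
    ‖t - t⁻¹‖ = ‖t - 1‖ * ‖t + 1‖ := by
  have ht0 : t ≠ 0 := norm_ne_zero_iff.mp (ht ▸ one_ne_zero)
  rw [show t - t⁻¹ = (t - 1) * (t + 1) * t⁻¹ by field_simp; ring, norm_mul, norm_mul,
    norm_inv, ht, inv_one, mul_one]

variable [IsUltrametricDist K]

lemma norm_eq_one_of_norm_self_sub_inv_lt_one {t : K} (ht : t ≠ 0) (h : ‖t - t⁻¹‖ < 1) :
    ‖t‖ = 1 := by
  have ht0 : 0 < ‖t‖ := norm_pos_iff.mpr ht
  rcases lt_trichotomy ‖t‖ 1 with hlt | heq | hgt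
  · have hinv : 1 < ‖t⁻¹‖ := by rwa [norm_inv, one_lt_inv₀ ht0]
    have : ‖t - t⁻¹‖ = ‖-t⁻¹‖ :=
      norm_eq_of_norm_sub_lt (by rw [sub_neg_eq_add, sub_add_cancel, norm_neg]; linarith)
    rw [this, norm_neg] at h
    linarith
  · exact heq
  · have hinv : ‖t⁻¹‖ < 1 := by rwa [norm_inv, inv_lt_one₀ ht0]
    have : ‖t - t⁻¹‖ = ‖t‖ :=
      norm_eq_of_norm_sub_lt (by rw [sub_sub_cancel_left, norm_neg]; linarith)
    linarith

lemma one_le_max_norm_sub_one_norm_add_one (h2 : ‖(2 : K)‖ = 1) (t : K) :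
    1 ≤ max ‖t - 1‖ ‖t + 1‖ := by
  calc 1 = ‖-(t - 1) + (t + 1)‖ := by rw [← h2]; ring_nf
    _ ≤ max ‖t - 1‖ ‖t + 1‖ := by simpa only [norm_neg] using norm_add_le_max (-(t - 1)) (t + 1)

theorem norm_self_sub_inv_le_iff (h2 : ‖(2 : K)‖ = 1) {r : ℝ} (hr : r < 1) {t : K}
    (ht : t ≠ 0) : ‖t - t⁻¹‖ ≤ r ↔ ‖t - 1‖ ≤ r ∨ ‖t + 1‖ ≤ r := by
  constructor
  · intro h
    rw [norm_self_sub_inv_of_norm_eq_one (norm_eq_one_of_norm_self_sub_inv_lt_one ht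
      (h.trans_lt hr))] at h
    rcases le_max_iff.mp (one_le_max_norm_sub_one_norm_add_one h2 t) with h1 | h1
    · exact Or.inr ((le_mul_of_one_le_left (norm_nonneg _) h1).trans h)
    · exact Or.inl ((le_mul_of_one_le_right (norm_nonneg _) h1).trans h)
  · intro h
    have ht1 : ‖t‖ = 1 := by
      rcases h with h | h
      · simpa using norm_eq_of_norm_sub_lt (y := (1 : K)) (by simpa using h.trans_lt hr)
      · simpa using norm_eq_of_norm_sub_lt (y := (-1 : K)) (by simpa using h.trans_lt hr)
    have hsub : ‖t - 1‖ ≤ 1 := by simpa [ht1, ← sub_eq_add_neg] using norm_add_le_max t (-1)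
    have hadd : ‖t + 1‖ ≤ 1 := by simpa [ht1] using norm_add_le_max t 1
    rw [norm_self_sub_inv_of_norm_eq_one ht1]
    rcases h with h | h
    · exact (mul_le_of_le_one_right (norm_nonneg _) hadd).trans h
    · exact (mul_le_of_le_one_left (norm_nonneg _) hsub).trans h

end NormedField

lemma Padic.norm_two_eq_one {p : ℕ} [Fact p.Prime] (hp2 : p ≠ 2) : ‖(2 : ℚ_[p])‖ = 1 := by
  have := Padic.norm_natCast_eq_one_iff (p := p) (n := 2)
  rw [Nat.cast_ofNat] at this
  exact this.mpr ((Nat.coprime_primes Fact.out Nat.prime_two).mpr hp2)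

/-- For an odd prime `p`, `n ≥ 1` and `t ∈ ℚ_p^×`:
`‖t − t⁻¹‖ ≤ p^{−n}` iff `t ∈ ±1 + pⁿℤ_p`. -/
theorem padic_self_sub_inv_small_iff
    (p : ℕ) [Fact p.Prime] (hp2 : p ≠ 2)
    (n : ℕ) (hn : 1 ≤ n) (t : ℚ_[p]) (ht : t ≠ 0) :
    ‖t - t⁻¹‖ ≤ (p : ℝ) ^ (-(n : ℤ)) ↔
      ‖t - 1‖ ≤ (p : ℝ) ^ (-(n : ℤ)) ∨ ‖t + 1‖ ≤ (p : ℝ) ^ (-(n : ℤ)) :=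
  norm_self_sub_inv_le_iff (Padic.norm_two_eq_one hp2)
    (zpow_lt_one_of_neg₀ (mod_cast (Fact.out : p.Prime).one_lt) (by omega)) ht
end
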